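/- Let p be a prime and let c, k, r be natural numbers with c ≥ 1, k ≥ 1, and 1 ≤ r ≤ p^k. Then s_p(c·p^k − r) = s_p(c−1) + (p−1)·k − s_p(r−1). -/
import Mathlib

/-- The digit sum of `n` in base `p`. -/
def digitSum (p n : ℕ) : ℕ := (Nat.digits p n).sum

lemma digitSum_div (p n : ℕ) (hp : 1 < p) : digitSum p n = n % p + digitSum p (n / p) := by
  rcases Nat.eq_zero_or_pos n with rfl | hn
  · simp [digitSum]
  · rw [digitSum, Nat.digits_def' hp hn]; simp [digitSum]

lemma len_le (p m k : ℕ) (hp : 1 < p) (h : m < p ^ k) : (Nat.digits p m).length ≤ k := by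
  rcases Nat.eq_zero_or_pos m with rfl | hm
  · simp
  · rw [Nat.digits_len p m hp hm.ne']
    have := Nat.log_lt_of_lt_pow hm.ne' h
    omega

lemma digitSum_add_pow_mul (p m k a : ℕ) (hp : 1 < p) (hm : m < p ^ k) :
    digitSum p (m + p ^ k * a) = digitSum p m + digitSum p a := by
  rcases Nat.eq_zero_or_pos a with rfl | ha
  · simp [digitSum]
  · have hlen : (Nat.digits p m).length ≤ k := len_le p m k hp hm
    obtain ⟨j, hj⟩ := Nat.le.dest hlen
    have := Nat.digits_append_zeroes_append_digits (b := p) (k := j) (m := a) (n := m) hp ha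
    rw [hj] at this
    rw [digitSum, ← this]
    simp [digitSum]

lemma digitSum_compl (p k : ℕ) (hp : 1 < p) : ∀ s, s < p ^ k →
    digitSum p (p ^ k - 1 - s) + digitSum p s = (p - 1) * k := by
  induction k with
  | zero =>
    intro s hs
    rw [pow_zero] at hs
    obtain rfl : s = 0 := by omega
    simp [digitSum]
  | succ k ih =>
    intro s hs
    have hq : s / p < p ^ k := Nat.div_lt_of_lt_mul (by rw [← pow_succ']; exact hs)
    have hd : s % p < p := Nat.mod_lt _ (by omega)
    have hpk : 1 ≤ p ^ k := Nat.one_le_pow _ _ (by omega)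
    have key : p ^ (k+1) - 1 - s = (p ^ k - 1 - s / p) * p + (p - 1 - s % p) := by
      have h1 : p * (s / p) + s % p = s := Nat.div_add_mod s p
      have h2 : (p ^ k - 1 - s / p) * p = p ^ k * p - p - (s / p) * p := by
        rw [Nat.sub_mul, Nat.sub_mul, one_mul]
      have h3 : (s / p) * p = p * (s / p) := mul_comm _ _
      have h4 : p ^ (k + 1) = p ^ k * p := pow_succ p k
      have h5 : (s / p + 1) * p ≤ p ^ k * p := Nat.mul_le_mul_right p hq
      rw [add_mul, one_mul] at h5
      omega
    rw [key, digitSum_div p _ hp]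
    have hlt : p - 1 - s % p < p := by omega
    rw [add_comm ((p ^ k - 1 - s / p) * p) (p - 1 - s % p), Nat.add_mul_mod_self_right, Nat.mod_eq_of_lt hlt,
      Nat.add_mul_div_right _ _ (by omega : 0 < p), Nat.div_eq_of_lt hlt, Nat.zero_add]
    rw [digitSum_div p s hp]
    have := ih (s / p) hq
    have : digitSum p (p ^ k - 1 - s / p) + digitSum p (s / p) = (p-1)*k := this
    have hle : s % p ≤ p - 1 := by omega
    have : (p - 1 - s % p) + digitSum p (p ^ k - 1 - s / p) + (s % p + digitSum p (s/p)) = (p-1)*(k+1) := by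
      rw [Nat.mul_succ]; omega
    omega

/-- The digit-sum identity from [HLS, Proposition 2.1] used in the proof of
Lemma 3.1 of the paper: for a prime `p`, `c ≥ 1`, `k ≥ 1` and `1 ≤ r ≤ p ^ k`,
`s_p(c * p ^ k - r) = s_p(c - 1) + (p - 1) * k - s_p(r - 1)`. -/
theorem digitSum_sub (p c k r : ℕ) (hp : p.Prime)
    (hc : 1 ≤ c) (hk : 1 ≤ k) (hr1 : 1 ≤ r) (hr2 : r ≤ p ^ k) :
    (digitSum p (c * p ^ k - r) : ℤ) =
      (digitSum p (c - 1) : ℤ) + ((p : ℤ) - 1) * (k : ℤ) - (digitSum p (r - 1) : ℤ) := by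
  have hp1 : 1 < p := hp.one_lt
  have hpk : 1 ≤ p ^ k := Nat.one_le_pow _ _ (by omega)
  have hm : p ^ k - r < p ^ k := by omega
  have h1 : c * p ^ k - r = (p ^ k - r) + p ^ k * (c - 1) := by
    obtain ⟨c', rfl⟩ := Nat.exists_eq_add_of_le hc
    have e1 : 1 + c' - 1 = c' := by omega
    rw [e1]
    have hcm : (1 + c') * p ^ k = p ^ k + p ^ k * c' := by ring
    omega
  rw [h1, digitSum_add_pow_mul p _ k _ hp1 hm]
  have h2 : p ^ k - r = p ^ k - 1 - (r - 1) := by omega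
  have h3 := digitSum_compl p k hp1 (r - 1) (by omega)
  rw [h2] at *
  have hcast : ((p : ℤ) - 1) * k = ((p - 1) * k : ℕ) := by
    push_cast [Nat.cast_sub hp1.le]; ring
  push_cast
  rw [hcast]
  push_cast
  omega
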